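/- Let d ∈ ℕ^I be nonzero and let θ, ω ∈ ℝ^I lie in the same facet of the hyperplane arrangement ℋ(d), i.e. sgn(f(d,e)(θ)) = sgn(f(d,e)(ω)) for every e ∈ S_d. Let M be an object of 𝒜 with φ(M) = d. Then M is θ-polystable if and only if M is ω-polystable. -/
import Mathlib


open CategoryTheory CategoryTheory.Limits

attribute [local instance] CategoryTheory.Limits.HasFiniteBiproducts.of_hasFiniteProducts

variable {𝒜 : Type*} [Category 𝒜] [Abelian 𝒜] {I : Type*} [Fintype I]

/-- The `θ`-degree of an object `M`: `deg_θ(M) = ∑ i, θ i * φ i M`. -/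
noncomputable def degTheta (φ : I → 𝒜 → ℤ) (θ : I → ℝ) (M : 𝒜) : ℝ :=
  ∑ i, θ i * (φ i M : ℝ)

/-- The rank of an object `M`: `rk(M) = ∑ i, φ i M`. -/
def rkPhi (φ : I → 𝒜 → ℤ) (M : 𝒜) : ℤ := ∑ i, φ i M

/-- The `θ`-slope of an object `M`: `μ_θ(M) = deg_θ(M) / rk(M)`. -/
noncomputable def muSlope (φ : I → 𝒜 → ℤ) (θ : I → ℝ) (M : 𝒜) : ℝ :=
  degTheta φ θ M / (rkPhi φ M : ℝ)

/-- The family `φ` is additive on short exact sequences. -/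
def IsAdditiveFamily (φ : I → 𝒜 → ℤ) : Prop :=
  ∀ i, ∀ S : ShortComplex 𝒜, S.ShortExact → φ i S.X₂ = φ i S.X₁ + φ i S.X₃

/-- The family `φ` is positive. -/
def IsPositiveFamily (φ : I → 𝒜 → ℤ) : Prop :=
  (∀ i, ∀ M : 𝒜, 0 ≤ φ i M) ∧ ∀ M : 𝒜, ¬ IsZero M → ∃ i, 0 < φ i M

/-- `M` is `θ`-semistable: it is nonzero and every nonzero proper subobject has
slope at most that of `M`. -/
noncomputable def Semistable (φ : I → 𝒜 → ℤ) (θ : I → ℝ) (M : 𝒜) : Prop :=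
  ¬ IsZero M ∧ ∀ N : Subobject M, N ≠ ⊥ → N ≠ ⊤ →
    muSlope φ θ ((N : 𝒜)) ≤ muSlope φ θ M

/-- `M` is `θ`-stable. -/
noncomputable def Stable (φ : I → 𝒜 → ℤ) (θ : I → ℝ) (M : 𝒜) : Prop :=
  ¬ IsZero M ∧ ∀ N : Subobject M, N ≠ ⊥ → N ≠ ⊤ →
    muSlope φ θ ((N : 𝒜)) < muSlope φ θ M


/-- The slope `μ_θ(d)` of a dimension vector `d ∈ ℕ^I`. -/
noncomputable def muSlopeVec (θ : I → ℝ) (d : I → ℕ) : ℝ :=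
  (∑ i, θ i * (d i : ℝ)) / (∑ i, (d i : ℝ))

/-- `M` has dimension vector `d`, i.e. `φ i M = d i` for all `i`. -/
def HasDimVec (φ : I → 𝒜 → ℤ) (M : 𝒜) (d : I → ℕ) : Prop :=
  ∀ i, φ i M = (d i : ℤ)

/-- `e ∈ S_d`: `e ∈ ℕ^I \ ℚd` and there exist an object `M` with `φ(M) = d` and a
subobject `N` of `M` with `φ(N) = e`. -/
def MemSd (φ : I → 𝒜 → ℤ) (d e : I → ℕ) : Prop :=
  (¬ ∃ q : ℚ, ∀ i, (e i : ℚ) = q * (d i : ℚ)) ∧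
  ∃ (M : 𝒜) (N : Subobject M), HasDimVec φ M d ∧ HasDimVec φ ((N : 𝒜)) e

/-- `θ` and `ω` lie in the same facet of the hyperplane arrangement `ℋ(d)`:
`sgn (f(d,e)(θ)) = sgn (f(d,e)(ω))` for every `e ∈ S_d`. -/
def SameFacet (φ : I → 𝒜 → ℤ) (d : I → ℕ) (θ ω : I → ℝ) : Prop :=
  ∀ e : I → ℕ, MemSd φ d e →
    Real.sign (muSlopeVec θ d - muSlopeVec θ e) =
      Real.sign (muSlopeVec ω d - muSlopeVec ω e)

/-- `M` is `θ`-polystable: `θ`-semistable and isomorphic to a finite direct sum of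
`θ`-stable objects. -/
noncomputable def Polystable (φ : I → 𝒜 → ℤ) (θ : I → ℝ) (M : 𝒜) : Prop :=
  Semistable φ θ M ∧
  ∃ (n : ℕ) (X : Fin n → 𝒜), (∀ i, Stable φ θ (X i)) ∧ Nonempty (M ≅ ⨁ X)


section AuxiliaryFacet

open ZeroObject

variable {𝒜 : Type*} [Category 𝒜] [Abelian 𝒜] {I : Type*} [Fintype I]
variable {φ : I → 𝒜 → ℤ}

lemma phi_zero (hadd : IsAdditiveFamily φ) (i : I) : φ i (0 : 𝒜) = 0 := by
  have h := hadd i (ShortComplex.mk (0 : (0:𝒜) ⟶ 0) (𝟙 (0:𝒜)) (by simp))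
    ((ShortComplex.Splitting.ofIsZeroOfIsIso _ (isZero_zero 𝒜) inferInstance).shortExact)
  simpa using h.symm

lemma phi_iso (hadd : IsAdditiveFamily φ) {M M' : 𝒜} (e : M ≅ M') (i : I) :
    φ i M = φ i M' := by
  have h := hadd i (ShortComplex.mk (0 : (0:𝒜) ⟶ M') e.inv (by simp))
    ((ShortComplex.Splitting.ofIsZeroOfIsIso _ (isZero_zero 𝒜) inferInstance).shortExact)
  rw [phi_zero hadd] at h
  simpa using h.symm

lemma phi_isZero (hadd : IsAdditiveFamily φ) {Z : 𝒜} (hZ : IsZero Z) (i : I) :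
    φ i Z = 0 := by
  rw [phi_iso hadd hZ.isoZero, phi_zero hadd]

/-- splitting of `X 0 → ⨁ X → ⨁ tail` -/
noncomputable def biprodSuccSplitting {n : ℕ} (X : Fin (n+1) → 𝒜) :
    (ShortComplex.mk (biproduct.ι X 0)
      (biproduct.lift (fun j : Fin n => biproduct.π X j.succ))
      (by ext j; simp [biproduct.ι_π_ne _ (Ne.symm (Fin.succ_ne_zero j))])).Splitting where
  r := biproduct.π X 0
  s := biproduct.desc (fun j : Fin n => biproduct.ι X j.succ)
  f_r := by simp
  s_g := by
    ext j k
    simp [biproduct.ι_π, Fin.succ_inj]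
  id := by
    ext j k
    rcases Fin.eq_zero_or_eq_succ j with rfl | ⟨j', rfl⟩ <;>
      rcases Fin.eq_zero_or_eq_succ k with rfl | ⟨k', rfl⟩ <;>
      simp [biproduct.lift_desc, Preadditive.comp_sum, Preadditive.sum_comp,
        biproduct.ι_π, biproduct.ι_π_assoc, Fin.succ_ne_zero, Fin.succ_inj,
        Ne.symm (Fin.succ_ne_zero _), dite_comp, comp_dite, eqToHom_trans,
        Finset.sum_dite_eq, Finset.sum_dite_eq']

lemma isZero_biproduct_fin_zero (X : Fin 0 → 𝒜) : IsZero (⨁ X) := by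
  rw [IsZero.iff_id_eq_zero]
  apply biproduct.hom_ext
  exact fun j => j.elim0

lemma phi_biproduct (hadd : IsAdditiveFamily φ) {n : ℕ} (X : Fin n → 𝒜) (i : I) :
    φ i (⨁ X) = ∑ j, φ i (X j) := by
  induction n with
  | zero => simp [phi_isZero hadd (isZero_biproduct_fin_zero X)]
  | succ n ih =>
      have h := hadd i _ (biprodSuccSplitting X).shortExact
      rw [Fin.sum_univ_succ, ← ih (fun j : Fin n => X j.succ)]
      exact h

lemma degTheta_iso (hadd : IsAdditiveFamily φ) {M M' : 𝒜} (e : M ≅ M') (τ : I → ℝ) :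
    degTheta φ τ M = degTheta φ τ M' := by
  simp [degTheta, phi_iso hadd e]

lemma rkPhi_iso (hadd : IsAdditiveFamily φ) {M M' : 𝒜} (e : M ≅ M') :
    rkPhi φ M = rkPhi φ M' := by
  simp [rkPhi, phi_iso hadd e]

lemma muSlope_iso (hadd : IsAdditiveFamily φ) {M M' : 𝒜} (e : M ≅ M') (τ : I → ℝ) :
    muSlope φ τ M = muSlope φ τ M' := by
  rw [muSlope, muSlope, degTheta_iso hadd e, rkPhi_iso hadd e]

lemma degTheta_biproduct (hadd : IsAdditiveFamily φ) {n : ℕ} (X : Fin n → 𝒜)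
    (τ : I → ℝ) : degTheta φ τ (⨁ X) = ∑ j, degTheta φ τ (X j) := by
  simp only [degTheta, phi_biproduct hadd]
  push_cast
  simp_rw [Finset.mul_sum]
  exact Finset.sum_comm

lemma rkPhi_biproduct (hadd : IsAdditiveFamily φ) {n : ℕ} (X : Fin n → 𝒜) :
    rkPhi φ (⨁ X) = ∑ j, rkPhi φ (X j) := by
  simp only [rkPhi, phi_biproduct hadd]
  exact Finset.sum_comm

lemma real_sign_nonneg_of {x y : ℝ} (h : Real.sign x = Real.sign y) (hx : 0 ≤ x) :
    0 ≤ y := by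
  rcases lt_trichotomy y 0 with hy | hy | hy
  · rcases hx.eq_or_lt with hx' | hx'
    · rw [← hx', Real.sign_zero, Real.sign_of_neg hy] at h; norm_num at h
    · rw [Real.sign_of_pos hx', Real.sign_of_neg hy] at h; norm_num at h
  · exact hy.ge
  · exact hy.le

lemma real_sign_pos_of {x y : ℝ} (h : Real.sign x = Real.sign y) (hx : 0 < x) :
    0 < y := by
  rcases lt_trichotomy y 0 with hy | hy | hy
  · rw [Real.sign_of_pos hx, Real.sign_of_neg hy] at h; norm_num at h
  · rw [Real.sign_of_pos hx, hy, Real.sign_zero] at h; norm_num at h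
  · exact hy

lemma real_sign_zero_of {x y : ℝ} (h : Real.sign x = Real.sign y) (hx : x = 0) :
    y = 0 := by
  subst hx
  rw [Real.sign_zero] at h
  exact Real.sign_eq_zero_iff.mp h.symm

lemma muSlope_eq_vec {M : 𝒜} {e : I → ℕ} (h : HasDimVec φ M e) (τ : I → ℝ) :
    muSlope φ τ M = muSlopeVec τ e := by
  have h' : ∀ i, φ i M = ((e i : ℕ) : ℤ) := h
  simp only [muSlope, muSlopeVec, degTheta, rkPhi, h']
  push_cast
  rfl

lemma sum_pos_of_dim [Nonempty I] (hpos : IsPositiveFamily φ) {M : 𝒜} {e : I → ℕ}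
    (h : HasDimVec φ M e) (hM : ¬ IsZero M) : 0 < ∑ i, (e i : ℝ) := by
  obtain ⟨i, hi⟩ := hpos.2 M hM
  refine Finset.sum_pos' (fun j _ => by positivity) ⟨i, Finset.mem_univ i, ?_⟩
  have := h i
  have : (0:ℤ) < (e i : ℤ) := by rw [← h i]; exact hi
  exact_mod_cast this

lemma sum_d_pos [Nonempty I] {d : I → ℕ} (hd : d ≠ 0) : 0 < ∑ i, (d i : ℝ) := by
  obtain ⟨i, hi⟩ := Function.ne_iff.mp hd
  refine Finset.sum_pos' (fun j _ => by positivity) ⟨i, Finset.mem_univ i, ?_⟩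
  have : 0 < d i := Nat.pos_of_ne_zero hi
  exact_mod_cast this

lemma muSlopeVec_eq_of_prop {d e : I → ℕ} (hdpos : 0 < ∑ i, (d i : ℝ))
    (hepos : 0 < ∑ i, (e i : ℝ)) (q : ℚ) (h : ∀ i, (e i : ℚ) = q * (d i : ℚ))
    (τ : I → ℝ) : muSlopeVec τ e = muSlopeVec τ d := by
  have hR : ∀ i, (e i : ℝ) = (q : ℝ) * (d i : ℝ) := fun i => by exact_mod_cast h i
  have h2 : ∑ i, (e i : ℝ) = (q : ℝ) * ∑ i, (d i : ℝ) := by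
    simp_rw [hR]; rw [Finset.mul_sum]
  have hq : (q : ℝ) ≠ 0 := by
    intro h0
    rw [h0, zero_mul] at h2
    exact hepos.ne' h2
  have h1 : ∑ i, τ i * (e i : ℝ) = (q : ℝ) * ∑ i, τ i * (d i : ℝ) := by
    simp_rw [hR]
    rw [Finset.mul_sum]
    exact Finset.sum_congr rfl (fun i _ => by ring)
  rw [muSlopeVec, muSlopeVec, h1, h2, mul_div_mul_left _ _ hq]

lemma nonzero_of_ne_bot {M : 𝒜} {N : Subobject M} (h : N ≠ ⊥) : ¬ IsZero (N : 𝒜) := by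
  intro hz
  apply h
  have harr : N.arrow = 0 := hz.eq_of_src _ _
  rw [← Subobject.mk_arrow N]
  exact Subobject.mk_eq_bot_iff_zero.mpr harr

lemma ne_bot_of_nonzero {M : 𝒜} {N : Subobject M} (h : ¬ IsZero (N : 𝒜)) : N ≠ ⊥ := by
  intro hb
  subst hb
  exact h (IsZero.of_iso (isZero_zero 𝒜) Subobject.botCoeIsoZero)

lemma sign_transfer [Nonempty I] (hpos : IsPositiveFamily φ)
    {d : I → ℕ} (hd : d ≠ 0) {θ ω : I → ℝ} (hfacet : SameFacet φ d θ ω)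
    {M : 𝒜} (hM : HasDimVec φ M d) (N : Subobject M) (hN : ¬ IsZero (N : 𝒜)) :
    Real.sign (muSlope φ θ M - muSlope φ θ ((N : 𝒜))) =
      Real.sign (muSlope φ ω M - muSlope φ ω ((N : 𝒜))) := by
  have hdim : HasDimVec φ ((N : 𝒜)) (fun i => (φ i ((N : 𝒜))).toNat) :=
    fun i => (Int.toNat_of_nonneg (hpos.1 i _)).symm
  set e : I → ℕ := fun i => (φ i ((N : 𝒜))).toNat with he
  rw [muSlope_eq_vec hM θ, muSlope_eq_vec hM ω, muSlope_eq_vec hdim θ, muSlope_eq_vec hdim ω]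
  by_cases hq : ∃ q : ℚ, ∀ i, (e i : ℚ) = q * (d i : ℚ)
  · obtain ⟨q, hq⟩ := hq
    have hdpos : 0 < ∑ i, (d i : ℝ) := sum_d_pos hd
    have hepos : 0 < ∑ i, (e i : ℝ) := sum_pos_of_dim hpos hdim hN
    rw [muSlopeVec_eq_of_prop hdpos hepos q hq θ,
      muSlopeVec_eq_of_prop hdpos hepos q hq ω, sub_self, sub_self]
  · exact hfacet e ⟨hq, M, N, hM, hdim⟩

lemma semistable_transfer [Nonempty I] (hadd : IsAdditiveFamily φ)
    (hpos : IsPositiveFamily φ) {d : I → ℕ} (hd : d ≠ 0) {θ ω : I → ℝ}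
    (hfacet : SameFacet φ d θ ω) {M : 𝒜} (hM : HasDimVec φ M d)
    (hss : Semistable φ θ M) : Semistable φ ω M := by
  obtain ⟨hMz, h⟩ := hss
  refine ⟨hMz, fun N hb ht => ?_⟩
  have hN := nonzero_of_ne_bot hb
  have hs := sign_transfer hpos hd hfacet hM N hN
  have hle := h N hb ht
  have h0 : 0 ≤ muSlope φ θ M - muSlope φ θ ((N : 𝒜)) := by linarith
  have := real_sign_nonneg_of hs h0
  linarith

lemma rk_pos [Nonempty I] (hpos : IsPositiveFamily φ) {A : 𝒜} (hA : ¬ IsZero A) :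
    0 < ((rkPhi φ A : ℤ) : ℝ) := by
  obtain ⟨i, hi⟩ := hpos.2 A hA
  have : (0:ℤ) < rkPhi φ A :=
    Finset.sum_pos' (fun j _ => hpos.1 j A) ⟨i, Finset.mem_univ i, hi⟩
  exact_mod_cast this

lemma polystable_transfer [Nonempty I] (hadd : IsAdditiveFamily φ)
    (hpos : IsPositiveFamily φ) {d : I → ℕ} (hd : d ≠ 0) {θ ω : I → ℝ}
    (hfacet : SameFacet φ d θ ω) {M : 𝒜} (hM : HasDimVec φ M d)
    (hp : Polystable φ θ M) : Polystable φ ω M := by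
  obtain ⟨⟨hMz, hss⟩, n, X, hstab, ⟨isoM⟩⟩ := hp
  have hssω : Semistable φ ω M := semistable_transfer hadd hpos hd hfacet hM ⟨hMz, hss⟩
  have hXz : ∀ j, ¬ IsZero (X j) := fun j => (hstab j).1
  -- the inclusions of the summands
  let inc : ∀ j, X j ⟶ M := fun j => biproduct.ι X j ≫ isoM.inv
  haveI hmono : ∀ j, Mono (inc j) := fun j => mono_comp _ _
  let S : ∀ j, Subobject M := fun j => Subobject.mk (inc j)
  have hSiso : ∀ j τ, muSlope φ τ ((S j : 𝒜)) = muSlope φ τ (X j) := fun j τ =>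
    muSlope_iso hadd (Subobject.underlyingIso (inc j)) τ
  have hSnz : ∀ j, ¬ IsZero ((S j : 𝒜)) := fun j hz =>
    hXz j (IsZero.of_iso hz (Subobject.underlyingIso (inc j)).symm)
  -- θ-slopes of the summands are at most that of M
  have hle : ∀ j, muSlope φ θ (X j) ≤ muSlope φ θ M := by
    intro j
    by_cases htop : S j = ⊤
    · haveI : IsIso (inc j) := (Subobject.isIso_iff_mk_eq_top (inc j)).mpr htop
      exact le_of_eq (muSlope_iso hadd (asIso (inc j)) θ)
    · have := hss (S j) (ne_bot_of_nonzero (hSnz j)) htop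
      rw [hSiso j θ] at this
      exact this
  -- additivity of degree and rank over the direct sum
  have hrkM : ((rkPhi φ M : ℤ) : ℝ) = ∑ j, ((rkPhi φ (X j) : ℤ) : ℝ) := by
    rw [rkPhi_iso hadd isoM, rkPhi_biproduct hadd]
    push_cast
    rfl
  have hdegM : ∀ τ : I → ℝ, degTheta φ τ M = ∑ j, degTheta φ τ (X j) := fun τ => by
    rw [degTheta_iso hadd isoM, degTheta_biproduct hadd]
  have hrkpos : ∀ j, 0 < ((rkPhi φ (X j) : ℤ) : ℝ) := fun j => rk_pos hpos (hXz j)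
  have hrkMpos : 0 < ((rkPhi φ M : ℤ) : ℝ) := rk_pos hpos hMz
  -- the θ-slopes of the summands all equal that of M
  have heqθ : ∀ j, muSlope φ θ (X j) = muSlope φ θ M := by
    have hle' : ∀ j ∈ Finset.univ (α := Fin n),
        degTheta φ θ (X j) ≤ muSlope φ θ M * ((rkPhi φ (X j) : ℤ) : ℝ) := by
      intro j _
      have := hle j
      rw [muSlope, div_le_iff₀ (hrkpos j)] at this
      exact this
    have hsum : ∑ j, degTheta φ θ (X j)
        = ∑ j, muSlope φ θ M * ((rkPhi φ (X j) : ℤ) : ℝ) := by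
      rw [← Finset.mul_sum, ← hrkM, ← hdegM θ, muSlope, div_mul_cancel₀ _ hrkMpos.ne']
    have := (Finset.sum_eq_sum_iff_of_le hle').mp hsum
    intro j
    have hj := this j (Finset.mem_univ j)
    rw [muSlope, div_eq_iff (hrkpos j).ne']
    exact hj
  -- transfer the equalities to ω
  have heqω : ∀ j, muSlope φ ω (X j) = muSlope φ ω M := by
    intro j
    have hs := sign_transfer hpos hd hfacet hM (S j) (hSnz j)
    have h0 : muSlope φ θ M - muSlope φ θ ((S j : 𝒜)) = 0 := by
      rw [hSiso j θ, heqθ j, sub_self]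
    have := real_sign_zero_of hs h0
    rw [hSiso j ω] at this
    linarith
  refine ⟨hssω, n, X, fun j => ⟨hXz j, fun N hb ht => ?_⟩, ⟨isoM⟩⟩
  -- transfer stability of each summand
  haveI : Mono (N.arrow ≫ inc j) := mono_comp _ _
  let N' : Subobject M := Subobject.mk (N.arrow ≫ inc j)
  have hN'iso : ∀ τ, muSlope φ τ ((N' : 𝒜)) = muSlope φ τ ((N : 𝒜)) := fun τ =>
    muSlope_iso hadd (Subobject.underlyingIso (N.arrow ≫ inc j)) τ
  have hNz : ¬ IsZero ((N : 𝒜)) := nonzero_of_ne_bot hb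
  have hN'z : ¬ IsZero ((N' : 𝒜)) := fun hz =>
    hNz (IsZero.of_iso hz (Subobject.underlyingIso (N.arrow ≫ inc j)).symm)
  have hs := sign_transfer hpos hd hfacet hM N' hN'z
  have hlt : muSlope φ θ ((N : 𝒜)) < muSlope φ θ (X j) := (hstab j).2 N hb ht
  have h0 : 0 < muSlope φ θ M - muSlope φ θ ((N' : 𝒜)) := by
    rw [hN'iso θ]
    rw [heqθ j] at hlt
    linarith
  have := real_sign_pos_of hs h0
  rw [hN'iso ω] at this
  rw [heqω j]
  linarith

end AuxiliaryFacet

/-- if `θ` and `ω` lie in the same facet of `ℋ(d)` and `φ(M) = d`, then `M`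
is `θ`-polystable iff it is `ω`-polystable. -/
theorem polystable_iff_of_sameFacet [Nonempty I]
    (φ : I → 𝒜 → ℤ) (hadd : IsAdditiveFamily φ) (hpos : IsPositiveFamily φ)
    (d : I → ℕ) (hd : d ≠ 0) (θ ω : I → ℝ) (hfacet : SameFacet φ d θ ω)
    (M : 𝒜) (hM : HasDimVec φ M d) :
    Polystable φ θ M ↔ Polystable φ ω M := by
  constructor
  · exact polystable_transfer hadd hpos hd hfacet hM
  · exact polystable_transfer hadd hpos hd (fun e he => (hfacet e he).symm) hM
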